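/- arXiv:1512.07577 — 2 statements merged into one kernel-verified Lean document; each statement's English description precedes it below -/
import Mathlib

section
/- Let X be a complete decomposition space. Then X_n is the disjoint union, over all subsets {j_1 < ⋯ < j_k} of {0,…,n−1}, of the images s_{j_k}⋯s_{j_1}(→X_{n−k}), and each composite degeneracy s_{j_k}⋯s_{j_1} is injective on →X_{n−k}; i.e. every n-simplex is uniquely an iterated degeneracy of an effective simplex. -/
open CategoryTheory CategoryTheory.Limits Simplicial Opposite

/-- A map in the simplex category is *generic* if it preserves the endpoints. -/
def IsGeneric {a b : SimplexCategory} (g : a ⟶ b) : Prop :=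
  g.toOrderHom 0 = 0 ∧ g.toOrderHom (Fin.last a.len) = Fin.last b.len

/-- A map in the simplex category is *free* if it is distance preserving. -/
def IsFree {a b : SimplexCategory} (f : a ⟶ b) : Prop :=
  ∀ i : Fin (a.len + 1), (f.toOrderHom i : ℕ) = (f.toOrderHom 0 : ℕ) + (i : ℕ)

/-- A decomposition space is a simplicial set carrying every pushout in `Δ` of a
generic map `g` along a free map `f` to a pullback of sets. -/
def IsDecomposition (X : SSet) : Prop :=
  ∀ ⦃a b c d : SimplexCategory⦄ (g : a ⟶ b) (f : a ⟶ c) (h : b ⟶ d) (k : c ⟶ d),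
    IsGeneric g → IsFree f → IsPushout g f h k →
    IsPullback (X.map h.op) (X.map k.op) (X.map g.op) (X.map f.op)

/-- A simplicial set is *complete* if all degeneracy maps are injective. -/
def Complete (X : SSet) : Prop :=
  ∀ (n : ℕ) (i : Fin (n + 1)), Function.Injective (X.σ i : X _⦋n⦌ ⟶ X _⦋n + 1⦌)

/-- The free map `[1] → [n]` sending `0, 1` to `i, i+1`; it induces the map
taking the `i`-th principal edge (`0`-indexed) of an `n`-simplex. -/
def principalEdge (n : ℕ) (i : Fin n) : (⦋1⦌ : SimplexCategory) ⟶ ⦋n⦌ :=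
  SimplexCategory.mkHom
    { toFun := fun j => ⟨i.1 + j.1, by have := i.2; have := j.2; omega⟩
      monotone' := fun a b h => by
        simp only [Fin.mk_le_mk]
        exact Nat.add_le_add_left h i.1 }

/-- The unique generic map `[1] → [n]` (`0 ↦ 0`, `1 ↦ n`); it induces the map
taking the long edge of an `n`-simplex. -/
def longEdgeMap (n : ℕ) : (⦋1⦌ : SimplexCategory) ⟶ ⦋n⦌ :=
  SimplexCategory.mkHom
    { toFun := fun j => ⟨j.1 * n, by
        have h := j.2
        have : j.1 * n ≤ 1 * n := Nat.mul_le_mul_right n (by omega)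
        omega⟩
      monotone' := fun a b h => by
        simp only [Fin.mk_le_mk]
        exact Nat.mul_le_mul_right n h }

/-- The alphabet `{0, 1, a}`: `z` prescribes a degenerate principal edge, `o` an
unrestricted one, `a` a nondegenerate one. -/
inductive Letter where
  | z
  | o
  | a
  deriving DecidableEq

/-- The subset of `X₁` prescribed by a letter. -/
def edgeSet (X : SSet) : Letter → Set (X _⦋1⦌) := fun l => match l with
  | .z => Set.range (X.σ (0 : Fin 1))
  | .o => Set.univ
  | .a => (Set.range (X.σ (0 : Fin 1)))ᶜ

/-- `X_w`, the set of `n`-simplices whose principal edges have the types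
prescribed by the word `w`. -/
def wordSet (X : SSet) {n : ℕ} (w : Fin n → Letter) : Set (X _⦋n⦌) :=
  {σ | ∀ i : Fin n, X.map (principalEdge n i).op σ ∈ edgeSet X (w i)}

/-- A simplex is *effective* if all its principal edges are nondegenerate. -/
def Effective (X : SSet) {n : ℕ} (σ : X _⦋n⦌) : Prop :=
  ∀ i : Fin n, X.map (principalEdge n i).op σ ∉ Set.range (X.σ (0 : Fin 1))

/-- The constant word `aa⋯a`. -/
def allA (n : ℕ) : Fin n → Letter := fun _ => Letter.a

/-- Concatenation of words. -/
def concatW {m n : ℕ} (v : Fin m → Letter) (v' : Fin n → Letter) : Fin (m + n) → Letter :=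
  fun i => if h : i.1 < m then v ⟨i.1, h⟩ else v' ⟨i.1 - m, by have := i.2; omega⟩

/-- The word `v ℓ v'` obtained by splicing a letter `ℓ` between the words `v` and `v'`. -/
def splice {m n : ℕ} (v : Fin m → Letter) (l : Letter) (v' : Fin n → Letter) :
    Fin (m + n + 1) → Letter :=
  fun i => if h : i.1 < m then v ⟨i.1, h⟩
    else if h2 : i.1 = m then l
    else v' ⟨i.1 - (m + 1), by have := i.2; omega⟩

/-- A simplex (of positive dimension) is degenerate if it is in the image of some
degeneracy map. -/
def Degen (X : SSet) {n : ℕ} (σ : X _⦋n + 1⦌) : Prop :=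
  ∃ i : Fin (n + 1), σ ∈ Set.range (X.σ i)

/-- A simplicial map is *cULF* if its naturality squares on all generic maps are
pullbacks. -/
def IsCULF {Y X : SSet} (f : Y ⟶ X) : Prop :=
  ∀ ⦃a b : SimplexCategory⦄ (g : a ⟶ b), IsGeneric g →
    IsPullback (f.app (op b)) (Y.map g.op) (X.map g.op) (f.app (op a))

/-- A simplicial map is *conservative* if its naturality squares on all degeneracy
maps are pullbacks. -/
def Conservative {Y X : SSet} (f : Y ⟶ X) : Prop :=
  ∀ (n : ℕ) (i : Fin (n + 1)),
    IsPullback (f.app (op (SimplexCategory.mk n))) (Y.σ i) (X.σ i)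
      (f.app (op (SimplexCategory.mk (n + 1))))

/-- A simplicial set is *stiff* if it carries every pushout in `Δ` of a codegeneracy
map along a free map to a pullback of sets. -/
def Stiff (X : SSet) : Prop :=
  ∀ (k : ℕ) (i : Fin (k + 1)) ⦃c d : SimplexCategory⦄
    (f : SimplexCategory.mk (k + 1) ⟶ c) (h : SimplexCategory.mk k ⟶ d) (j : c ⟶ d),
    IsFree f → IsPushout (SimplexCategory.σ i) f h j →
    IsPullback (X.map h.op) (X.map j.op) (X.map (SimplexCategory.σ i).op) (X.map f.op)

/-- The map `[0] → [n]` picking out the vertex `i`. -/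
def vertexMap (n : ℕ) (i : Fin (n + 1)) : (⦋0⦌ : SimplexCategory) ⟶ ⦋n⦌ :=
  SimplexCategory.mkHom ⟨fun _ => i, fun _ _ _ => le_refl _⟩

/-- The unique map `[n] → [0]`; it induces the iterated degeneracy `X₀ → Xₙ`. -/
def toZero (n : ℕ) : (⦋n⦌ : SimplexCategory) ⟶ ⦋0⦌ :=
  SimplexCategory.mkHom ⟨fun _ => 0, fun _ _ _ => le_refl _⟩

/-- The generic map `[2] → [m+n]` sending `0,1,2` to `0,m,m+n`. -/
def midMap (m n : ℕ) : (⦋2⦌ : SimplexCategory) ⟶ ⦋m + n⦌ :=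
  SimplexCategory.mkHom
    { toFun := fun j => ⟨if j.1 = 0 then 0 else if j.1 = 1 then m else m + n, by
        split
        · omega
        · split <;> omega⟩
      monotone' := by
        intro a b hab
        have h : a.1 ≤ b.1 := hab
        have ha := a.2
        have hb := b.2
        simp only [Fin.mk_le_mk]
        split <;> split <;> (try split) <;> (try split) <;> omega }

/-- The free map `[m] → [m+n]` onto the initial segment. -/
def freeInitial (m n : ℕ) : (⦋m⦌ : SimplexCategory) ⟶ ⦋m + n⦌ :=
  SimplexCategory.mkHom ⟨fun i => ⟨i.1, by have := i.2; omega⟩, fun a b h => h⟩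

/-- The free map `[n] → [m+n]` onto the final segment. -/
def freeFinal (m n : ℕ) : (⦋n⦌ : SimplexCategory) ⟶ ⦋m + n⦌ :=
  SimplexCategory.mkHom ⟨fun i => ⟨m + i.1, by have := i.2; omega⟩,
    fun a b h => by
      simp only [Fin.mk_le_mk]
      exact Nat.add_le_add_left h m⟩

/-- The word `1aa⋯a` (`n` letters `a`). -/
def oneA (n : ℕ) : Fin (n + 1) → Letter := fun i => if i.1 = 0 then Letter.o else Letter.a

/-- The word `0aa⋯a` (`n` letters `a`). -/
def zeroA (n : ℕ) : Fin (n + 1) → Letter := fun i => if i.1 = 0 then Letter.z else Letter.a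

/-- The word `aa⋯a1` (`n` letters `a`). -/
def aOne (n : ℕ) : Fin (n + 1) → Letter := fun i => if i.1 = n then Letter.o else Letter.a

/-- The word `aa⋯a0` (`n` letters `a`). -/
def aZero (n : ℕ) : Fin (n + 1) → Letter := fun i => if i.1 = n then Letter.z else Letter.a

/-- The number of letters `0` in a word. -/
def zcount {n : ℕ} (w : Fin n → Letter) : ℕ :=
  (Finset.univ.filter fun i => w i = Letter.z).card

/-- The surjection `[n] → [n - zcount w]` collapsing, for each position `j` with
`w j = 0`, the vertex `j+1` onto the vertex `j`; the induced map
`X_{n - zcount w} → X_n` is the iterated degeneracy `s_{j_k} ⋯ s_{j_1}` where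
`j_1 < ⋯ < j_k` are the positions of the letters `0` of `w`. -/
def collapseMap {n : ℕ} (w : Fin n → Letter) :
    (⦋n⦌ : SimplexCategory) ⟶ ⦋n - zcount w⦌ :=
  SimplexCategory.mkHom
    { toFun := fun t =>
        ⟨(Finset.univ.filter fun i : Fin n => i.1 < t.1 ∧ ¬ (w i = Letter.z)).card, by
          have h2 := Finset.card_filter_add_card_filter_not
            (s := (Finset.univ : Finset (Fin n))) (p := fun i => w i = Letter.z)
          have h1 : (Finset.univ.filter fun i : Fin n => i.1 < t.1 ∧ ¬ (w i = Letter.z)).card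
              ≤ (Finset.univ.filter fun i : Fin n => ¬ (w i = Letter.z)).card :=
            Finset.card_le_card (fun x hx => by
              simp only [Finset.mem_filter] at hx ⊢
              exact ⟨hx.1, hx.2.2⟩)
          have h3 : zcount w = (Finset.univ.filter fun i : Fin n => w i = Letter.z).card := rfl
          simp only [Finset.card_univ, Fintype.card_fin] at h2
          omega⟩
      monotone' := by
        intro a b hab
        have h : a.1 ≤ b.1 := hab
        simp only [Fin.mk_le_mk]
        exact Finset.card_le_card (fun x hx => by
          simp only [Finset.mem_filter] at hx ⊢
          exact ⟨hx.1, lt_of_lt_of_le hx.2.1 h, hx.2.2⟩) }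

/-- An edge has finite length if there is a bound on the dimensions of the effective
simplices having it as long edge. -/
def FiniteLength (X : SSet) (a : X _⦋1⦌) : Prop :=
  ∃ N : ℕ, ∀ (n : ℕ) (σ : X _⦋n⦌), Effective X σ →
    X.map (longEdgeMap n).op σ = a → n ≤ N

/-- A *tight* decomposition space: a complete decomposition space in which every edge
has finite length. -/
def Tight (X : SSet) : Prop :=
  IsDecomposition X ∧ Function.Injective (X.σ (0 : Fin 1) : X _⦋0⦌ ⟶ X _⦋1⦌) ∧
    ∀ a : X _⦋1⦌, FiniteLength X a

/-- The length of an edge: the supremum of the dimensions of effective simplices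
having it as long edge. -/
noncomputable def edgeLength (X : SSet) (a : X _⦋1⦌) : ℕ :=
  sSup {n | ∃ σ : X _⦋n⦌, Effective X σ ∧ X.map (longEdgeMap n).op σ = a}

/-- A complete simplicial set is *split* if all face maps preserve nondegenerate
simplices. -/
def Split (X : SSet) : Prop :=
  Complete X ∧ ∀ (n : ℕ) (i : Fin (n + 3)) (σ : X _⦋n + 2⦌),
    ¬ Degen X σ → ¬ Degen X (X.δ i σ)

/-- The counit: the indicator function of the degenerate edges. -/
noncomputable def epsFun (X : SSet) : X _⦋1⦌ → ℚ := fun f =>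
  haveI := Classical.propDecidable (f ∈ Set.range (X.σ (0 : Fin 1)))
  if f ∈ Set.range (X.σ (0 : Fin 1)) then 1 else 0

/-- Convolution product on `ℚ`-valued functions on `X₁`. -/
noncomputable def convFun (X : SSet) (φ ψ : X _⦋1⦌ → ℚ) : X _⦋1⦌ → ℚ :=
  fun f => ∑ᶠ σ ∈ (fun τ => X.δ (1 : Fin 3) τ) ⁻¹' {f},
    φ (X.δ (2 : Fin 3) σ) * ψ (X.δ (0 : Fin 3) σ)

/-- The Möbius function `Φ_even - Φ_odd`. -/
noncomputable def muFun (X : SSet) : X _⦋1⦌ → ℚ :=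
  fun f => ∑ᶠ n : ℕ, (-1 : ℚ) ^ n *
    (Nat.card {σ : X.obj (op (SimplexCategory.mk n)) // Effective X σ ∧ X.map (longEdgeMap n).op σ = f} : ℚ)

/-- The category `Δ_inj`: objects those of the simplex category, morphisms the
injective monotone maps. -/
structure DeltaInj : Type where
  /-- the underlying object of the simplex category -/
  obj : SimplexCategory

instance : Category DeltaInj where
  Hom a b := {f : a.obj ⟶ b.obj // Function.Injective f.toOrderHom}
  id a := ⟨𝟙 a.obj, by
    rw [SimplexCategory.id_toOrderHom]
    exact fun x y h => h⟩
  comp f g := ⟨f.1 ≫ g.1, by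
    rw [SimplexCategory.comp_toOrderHom]
    exact fun x y h => f.2 (g.2 h)⟩
  id_comp f := by apply Subtype.ext; simp
  comp_id f := by apply Subtype.ext; simp
  assoc f g h := by apply Subtype.ext; simp

/-- The inclusion functor `Δ_inj ⊆ Δ`. -/
def DeltaInj.incl : DeltaInj ⥤ SimplexCategory where
  obj a := a.obj
  map f := f.1

/-- A *semi-decomposition space*: a semi-simplicial set carrying every pushout in
`Δ_inj` of a generic (inner) face map along a free (outer) face map to a pullback. -/
def IsSemiDecomposition (Z : DeltaInjᵒᵖ ⥤ Type) : Prop :=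
  ∀ ⦃a b c d : DeltaInj⦄ (g : a ⟶ b) (f : a ⟶ c) (h : b ⟶ d) (k : c ⟶ d),
    IsGeneric g.1 → IsFree f.1 → IsPushout g f h k →
    IsPullback (Z.map h.op) (Z.map k.op) (Z.map g.op) (Z.map f.op)

/-- A map of semi-simplicial sets is *ULF* if its naturality squares on all generic
face maps are pullbacks. -/
def IsULF {Z W : DeltaInjᵒᵖ ⥤ Type} (φ : Z ⟶ W) : Prop :=
  ∀ ⦃a b : DeltaInj⦄ (g : a ⟶ b), IsGeneric g.1 →
    IsPullback (φ.app (op b)) (Z.map g.op) (W.map g.op) (φ.app (op a))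

lemma conservative_id (X : SSet) : Conservative (𝟙 X) := by
  intro n i
  exact IsPullback.of_horiz_isIso ⟨by simp⟩

lemma conservative_comp {X Y Z : SSet} {f : X ⟶ Y} {g : Y ⟶ Z}
    (hf : Conservative f) (hg : Conservative g) : Conservative (f ≫ g) := by
  intro n i
  simpa using IsPullback.paste_horiz (hf n i) (hg n i)

lemma isCULF_id (X : SSet) : IsCULF (𝟙 X) := by
  intro a b gm hgm
  exact IsPullback.of_horiz_isIso ⟨by simp⟩

lemma isCULF_comp {X Y Z : SSet} {f : X ⟶ Y} {g : Y ⟶ Z}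
    (hf : IsCULF f) (hg : IsCULF g) : IsCULF (f ≫ g) := by
  intro a b gm hgm
  simpa using IsPullback.paste_horiz (hf gm hgm) (hg gm hgm)

lemma isULF_id (Z : DeltaInjᵒᵖ ⥤ Type) : IsULF (𝟙 Z) := by
  intro a b gm hgm
  exact IsPullback.of_horiz_isIso ⟨by simp⟩

lemma isULF_comp {X Y Z : DeltaInjᵒᵖ ⥤ Type} {f : X ⟶ Y} {g : Y ⟶ Z}
    (hf : IsULF f) (hg : IsULF g) : IsULF (f ≫ g) := by
  intro a b gm hgm
  simpa using IsPullback.paste_horiz (hf gm hgm) (hg gm hgm)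

/-- The category of split simplicial sets and conservative maps. -/
structure SplitSSet : Type 1 where
  /-- the underlying simplicial set -/
  X : SSet.{0}
  split : Split X

instance : Category SplitSSet where
  Hom A B := {f : A.X ⟶ B.X // Conservative f}
  id A := ⟨𝟙 A.X, conservative_id A.X⟩
  comp f g := ⟨f.1 ≫ g.1, conservative_comp f.2 g.2⟩
  id_comp f := by apply Subtype.ext; simp
  comp_id f := by apply Subtype.ext; simp
  assoc f g h := by apply Subtype.ext; simp

/-- The forgetful functor from split simplicial sets to simplicial sets. -/
def SplitSSet.forget : SplitSSet ⥤ SSet where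
  obj A := A.X
  map f := f.1

/-- The category of split decomposition spaces and cULF maps. -/
structure SplitDecomp : Type 1 where
  /-- the underlying simplicial set -/
  X : SSet.{0}
  split : Split X
  decomp : IsDecomposition X

instance : Category SplitDecomp where
  Hom A B := {f : A.X ⟶ B.X // IsCULF f}
  id A := ⟨𝟙 A.X, isCULF_id A.X⟩
  comp f g := ⟨f.1 ≫ g.1, isCULF_comp f.2 g.2⟩
  id_comp f := by apply Subtype.ext; simp
  comp_id f := by apply Subtype.ext; simp
  assoc f g h := by apply Subtype.ext; simp

/-- The forgetful functor from split decomposition spaces to simplicial sets. -/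
def SplitDecomp.forget : SplitDecomp ⥤ SSet where
  obj A := A.X
  map f := f.1

/-- The category of semi-decomposition spaces and ULF maps. -/
structure SemiDecomp : Type 1 where
  /-- the underlying semi-simplicial set -/
  Z : DeltaInjᵒᵖ ⥤ Type
  semidecomp : IsSemiDecomposition Z

instance : Category SemiDecomp where
  Hom A B := {φ : A.Z ⟶ B.Z // IsULF φ}
  id A := ⟨𝟙 A.Z, isULF_id A.Z⟩
  comp f g := ⟨f.1 ≫ g.1, isULF_comp f.2 g.2⟩
  id_comp f := by apply Subtype.ext; simp
  comp_id f := by apply Subtype.ext; simp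
  assoc f g h := by apply Subtype.ext; simp

/-- The forgetful functor from semi-decomposition spaces to semi-simplicial sets. -/
def SemiDecomp.forget : SemiDecomp ⥤ (DeltaInjᵒᵖ ⥤ Type) where
  obj A := A.Z
  map f := f.1

/-!
Effective simplices are exactly the nondegenerate ones, so the statement is the
Eilenberg–Zilber lemma. The `i`-th principal edge of `s_i τ` is degenerate, so effective
simplices are nondegenerate in any simplicial set. Conversely, the pushout of
`[1] → [0]` along the `i`-th principal edge `[1] → [m+1]` is the codegeneracy
`[m+1] → [m]` collapsing `i+1` onto `i`; in a decomposition space this square becomes a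
pullback, so a simplex whose `i`-th principal edge is degenerate lies in the image of `s_i`.
-/

lemma map_mem_range_σ_zero_of_apply_eq (X : SSet) {k : ℕ} (θ : ⦋1⦌ ⟶ ⦋k⦌)
    (hθ : θ.toOrderHom 0 = θ.toOrderHom 1) (ρ : X _⦋k⦌) :
    X.map θ.op ρ ∈ Set.range (X.σ (0 : Fin 1)) := by
  have hfac : θ = SimplexCategory.σ 0 ≫ vertexMap k (θ.toOrderHom 0) := by
    ext j : 3
    change Fin 2 at j
    fin_cases j
    · rfl
    · exact hθ.symm
  rw [hfac, op_comp, Functor.map_comp]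
  exact Set.mem_range_self _

lemma isGeneric_σ_zero : IsGeneric (SimplexCategory.σ (0 : Fin 1)) :=
  ⟨rfl, Subsingleton.elim (α := Fin 1) _ _⟩

lemma isFree_principalEdge (n : ℕ) (i : Fin n) : IsFree (principalEdge n i) :=
  fun _ => rfl

lemma isPushout_σ_principalEdge (m : ℕ) (i : Fin (m + 1)) :
    IsPushout (SimplexCategory.σ (0 : Fin 1)) (principalEdge (m + 1) i) (vertexMap m i)
      (SimplexCategory.σ i) := by
  have hw : SimplexCategory.σ 0 ≫ vertexMap m i =
      principalEdge (m + 1) i ≫ SimplexCategory.σ i := by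
    ext j : 3
    change Fin 2 at j
    fin_cases j
    · exact (Fin.predAbove_castSucc_self i).symm
    · exact (Fin.predAbove_succ_self i).symm
  refine IsPushout.of_isColimit' ⟨hw⟩ <|
    PushoutCocone.IsColimit.mk hw (fun s => SimplexCategory.δ i.succ ≫ s.inr) ?_ ?_ ?_
  · intro s
    ext j : 3
    obtain rfl : j = 0 := Subsingleton.elim (α := Fin 1) _ _
    change s.inr.toOrderHom (i.succ.succAbove i) = _
    rw [Fin.succAbove_succ_self]
    exact (SimplexCategory.congr_toOrderHom_apply s.condition 0).symm
  · intro s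
    have hinr : s.inr.toOrderHom i.castSucc = s.inr.toOrderHom i.succ :=
      (SimplexCategory.congr_toOrderHom_apply s.condition 0).symm.trans
        (SimplexCategory.congr_toOrderHom_apply s.condition 1)
    ext j : 3
    change s.inr.toOrderHom (i.succ.succAbove (i.predAbove j)) = s.inr.toOrderHom j
    by_cases hj : j = i.succ
    · rw [hj, Fin.predAbove_succ_self, Fin.succAbove_succ_self, hinr]
    · rw [Fin.succ_succAbove_predAbove hj]
  · intro s v _ hr
    rw [← hr, ← Category.assoc, SimplexCategory.δ_comp_σ_succ, Category.id_comp]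

lemma Effective.mem_nonDegenerate {X : SSet} {n : ℕ} {σ : X _⦋n⦌} (h : Effective X σ) :
    σ ∈ X.nonDegenerate n := by
  cases n with
  | zero => simp
  | succ k =>
    rw [SSet.mem_nonDegenerate_iff_notMem_degenerate, SSet.degenerate_eq_iUnion_range_σ]
    rintro ⟨_, ⟨i, rfl⟩, τ, rfl⟩
    apply h i
    change X.map (principalEdge (k + 1) i).op (X.map (SimplexCategory.σ i).op τ) ∈ _
    rw [← Functor.map_comp_apply, ← op_comp]
    apply map_mem_range_σ_zero_of_apply_eq
    change i.predAbove i.castSucc = i.predAbove i.succ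
    rw [Fin.predAbove_castSucc_self, Fin.predAbove_succ_self]

lemma IsDecomposition.effective_of_mem_nonDegenerate {X : SSet} (hX : IsDecomposition X)
    {n : ℕ} {σ : X _⦋n⦌} (h : σ ∈ X.nonDegenerate n) : Effective X σ := by
  rintro i ⟨x, hx⟩
  cases n with
  | zero => exact i.elim0
  | succ m =>
    obtain ⟨τ, -, rfl⟩ := Types.exists_of_isPullback
      (hX _ _ _ _ isGeneric_σ_zero (isFree_principalEdge _ i) (isPushout_σ_principalEdge m i))
      x σ hx
    exact h (X.σ_mem_degenerate i τ)

theorem statement4_general (X : SSet) (hX : IsDecomposition X)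
    (n : ℕ) (σ : X _⦋n⦌) :
    ∃! p : Σ m : ℕ, (SimplexCategory.mk n ⟶ SimplexCategory.mk m) ×
        X.obj (op (SimplexCategory.mk m)),
      Function.Surjective p.2.1.toOrderHom ∧ Effective X p.2.2 ∧ σ = X.map p.2.1.op p.2.2 := by
  obtain ⟨m, f, hf, ⟨τ, hτ⟩, rfl⟩ := X.exists_nonDegenerate σ
  refine ⟨⟨m, f, τ⟩, ⟨SimplexCategory.epi_iff_surjective.1 hf,
    hX.effective_of_mem_nonDegenerate hτ, rfl⟩, ?_⟩
  rintro ⟨m', f', τ'⟩ ⟨hf', hτ', h⟩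
  have : Epi f' := SimplexCategory.epi_iff_surjective.2 hf'
  replace hτ' := hτ'.mem_nonDegenerate
  obtain rfl := X.unique_nonDegenerate_dim _ f' ⟨τ', hτ'⟩ h f ⟨τ, hτ⟩ rfl
  obtain rfl : τ' = τ := congrArg Subtype.val <|
    X.unique_nonDegenerate_simplex _ f' ⟨τ', hτ'⟩ h f ⟨τ, hτ⟩ rfl
  obtain rfl := X.unique_nonDegenerate_map _ f' ⟨_, hτ'⟩ h f ⟨_, hτ⟩ rfl
  rfl

theorem statement4 (X : SSet) (hX : IsDecomposition X)
    (hc : Function.Injective (X.σ (0 : Fin 1) : X _⦋0⦌ ⟶ X _⦋1⦌))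
    (n : ℕ) (σ : X _⦋n⦌) :
    ∃! p : Σ m : ℕ, (SimplexCategory.mk n ⟶ SimplexCategory.mk m) ×
        X.obj (op (SimplexCategory.mk m)),
      Function.Surjective p.2.1.toOrderHom ∧ Effective X p.2.2 ∧ σ = X.map p.2.1.op p.2.2 :=
  statement4_general X hX n σ
end

section
/- Let f : Y → X be a cULF map between complete simplicial sets. Then for every word w ∈ {0,1,a}^n, f maps Y_w into X_w, and the commutative square whose horizontal maps are the long-edge maps Y_w → Y_1 and X_w → X_1 (restrictions of the maps induced by the unique generic map [1] → [n]) and whose vertical maps are induced by f, is a pullback of sets. -/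
open CategoryTheory CategoryTheory.Limits Simplicial Opposite

/-!
A cULF map reflects degeneracy of edges (its square on the generic codegeneracy `[1] → [0]`
is a pullback) and commutes with taking principal edges, so `υ ∈ Y_w ↔ f υ ∈ X_w`. The
square on `Y_w, X_w` is therefore the restriction of the cULF pullback square on the long-edge
map to the full preimage of `X_w`, and such a restriction is again a pullback.
-/

lemma isGeneric_longEdgeMap (n : ℕ) : IsGeneric (longEdgeMap n) :=
  ⟨Fin.ext (zero_mul n), Fin.ext (one_mul n)⟩

namespace IsCULF

variable {Y X : SSet} {f : Y ⟶ X}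

lemma app_mem_range_σ_iff (hf : IsCULF f) (e : Y _⦋1⦌) :
    f.app (op ⦋1⦌) e ∈ Set.range (X.σ (0 : Fin 1)) ↔ e ∈ Set.range (Y.σ (0 : Fin 1)) := by
  constructor
  · rintro ⟨x, hx⟩
    obtain ⟨y, -, hy⟩ := Types.exists_of_isPullback (hf _ isGeneric_σ_zero) x e hx
    exact ⟨y, hy⟩
  · rintro ⟨y, rfl⟩
    exact ⟨f.app (op ⦋0⦌) y, (NatTrans.naturality_apply f _ y).symm⟩

lemma app_mem_edgeSet_iff (hf : IsCULF f) (l : Letter) (e : Y _⦋1⦌) :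
    f.app (op ⦋1⦌) e ∈ edgeSet X l ↔ e ∈ edgeSet Y l := by
  cases l
  · exact hf.app_mem_range_σ_iff e
  · simp [edgeSet]
  · exact not_congr (hf.app_mem_range_σ_iff e)

lemma app_mem_wordSet_iff (hf : IsCULF f) {n : ℕ} (w : Fin n → Letter) (σ : Y _⦋n⦌) :
    f.app (op ⦋n⦌) σ ∈ wordSet X w ↔ σ ∈ wordSet Y w := by
  refine forall_congr' fun i => ?_
  rw [← NatTrans.naturality_apply]
  exact hf.app_mem_edgeSet_iff (w i) _

end IsCULF

theorem statement5_general (Y X : SSet)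
    (f : Y ⟶ X) (hf : IsCULF f) (n : ℕ) (w : Fin n → Letter) :
    (∀ σ ∈ wordSet Y w, f.app (op (SimplexCategory.mk n)) σ ∈ wordSet X w) ∧
    (∀ (η : Y _⦋1⦌) (ξ : X _⦋n⦌), ξ ∈ wordSet X w →
      X.map (longEdgeMap n).op ξ = f.app (op (SimplexCategory.mk 1)) η →
      ∃! υ : Y _⦋n⦌, υ ∈ wordSet Y w ∧ Y.map (longEdgeMap n).op υ = η ∧
        f.app (op (SimplexCategory.mk n)) υ = ξ) := by
  have pb := hf (longEdgeMap n) (isGeneric_longEdgeMap n)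
  refine ⟨fun σ hσ => (hf.app_mem_wordSet_iff w σ).mpr hσ, fun η ξ hξ hlong => ?_⟩
  obtain ⟨υ, hυξ, hυη⟩ := Types.exists_of_isPullback pb ξ η hlong
  refine ⟨υ, ⟨(hf.app_mem_wordSet_iff w υ).mp (hυξ ▸ hξ), hυη, hυξ⟩, ?_⟩
  rintro υ' ⟨-, hυ'η, hυ'ξ⟩
  exact Types.ext_of_isPullback pb (hυ'ξ.trans hυξ.symm) (hυ'η.trans hυη.symm)

theorem statement5 (Y X : SSet) (hY : Complete Y) (hX : Complete X)
    (f : Y ⟶ X) (hf : IsCULF f) (n : ℕ) (w : Fin n → Letter) :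
    (∀ σ ∈ wordSet Y w, f.app (op (SimplexCategory.mk n)) σ ∈ wordSet X w) ∧
    (∀ (η : Y _⦋1⦌) (ξ : X _⦋n⦌), ξ ∈ wordSet X w →
      X.map (longEdgeMap n).op ξ = f.app (op (SimplexCategory.mk 1)) η →
      ∃! υ : Y _⦋n⦌, υ ∈ wordSet Y w ∧ Y.map (longEdgeMap n).op υ = η ∧
        f.app (op (SimplexCategory.mk n)) υ = ξ) :=
  statement5_general Y X f hf n w
end
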